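/- arXiv:2008.01601 — 2 statements merged into one kernel-verified Lean document; each statement's English description precedes it below -/
import Mathlib

section
/- Kummer's transformation: for all a, b, z with b not a nonpositive integer, M(a,b,z) = e^z · M(b-a, b, -z), where M is the confluent hypergeometric function defined by its power series M(a,b,z) = Σ_{n≥0} ((a)_n/(b)_n) zⁿ/n!. -/
/-!
Multiply the power series of `e^z` and `M(b-a, b, -z)` (Cauchy product of two absolutely
convergent series). The `n`-th coefficient of the product, cleared of the common factor
`zⁿ / (n! (b)ₙ)`, is `∑ᵢ (n choose i) (-1)ⁱ (b-a)ᵢ (b+i)ₙ₋ᵢ`, and this equals `(a)ₙ` by the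
Chu–Vandermonde identity for falling factorials.
-/

/-- Kummer's confluent hypergeometric function `M(a,b,z)` defined by its power series. -/
noncomputable def kummerM (a b z : ℝ) : ℝ :=
  ∑' n : ℕ, ((ascPochhammer ℝ n).eval a / (ascPochhammer ℝ n).eval b) * z ^ n / n.factorial

open Finset Filter Topology Polynomial

theorem summable_norm_of_succ_eq_mul_of_tendsto_zero {R : Type*} [NormedRing R] {f q : ℕ → R}
    (hf : ∀ n, f (n + 1) = f n * q n) (hq : Tendsto q atTop (𝓝 0)) :
    Summable fun n => ‖f n‖ := by
  have hq_small : ∀ᶠ n in atTop, ‖q n‖ < 1 / 2 := by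
    simpa using (tendsto_order.1 hq.norm).2 (1 / 2) (by norm_num)
  refine summable_of_ratio_norm_eventually_le (r := 1 / 2) (by norm_num) ?_
  filter_upwards [hq_small] with n hn
  rw [norm_norm, norm_norm, hf, mul_comm (1 / 2 : ℝ)]
  exact (norm_mul_le _ _).trans (by gcongr)

theorem descPochhammer_smeval_eq_eval {R : Type*} [Ring R] (r : R) (n : ℕ) :
    (descPochhammer ℤ n).smeval r = (descPochhammer R n).eval r := by
  rw [descPochhammer_smeval_eq_ascPochhammer, ascPochhammer_smeval_eq_eval,
    descPochhammer_eval_eq_ascPochhammer]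

theorem descPochhammer_eval_add {R : Type*} [Ring R] {r s : R} (n : ℕ) (h : Commute r s) :
    (descPochhammer R n).eval (r + s) = ∑ ij ∈ antidiagonal n,
      n.choose ij.1 * ((descPochhammer R ij.1).eval r * (descPochhammer R ij.2).eval s) := by
  simp only [← descPochhammer_smeval_eq_eval]
  exact Ring.descPochhammer_smeval_add n h

theorem ascPochhammer_eval_add_nat {R : Type*} [CommSemiring R] (r : R) (m n : ℕ) :
    (ascPochhammer R (m + n)).eval r =
      (ascPochhammer R m).eval r * (ascPochhammer R n).eval (r + m) := by
  rw [← ascPochhammer_mul, eval_mul, eval_comp]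
  simp

/-- In falling factorials this is Chu–Vandermonde for `(a - b) + (b + n - 1)`:
`(a)ₙ = (a+n-1)^{(n)}`, `(-1)ⁱ (b-a)ᵢ = (a-b)^{(i)}` and `(b+i)ⱼ = (b+n-1)^{(j)}`. -/
theorem ascPochhammer_eval_eq_sum_antidiagonal {R : Type*} [CommRing R] (a b : R) (n : ℕ) :
    (ascPochhammer R n).eval a = ∑ ij ∈ antidiagonal n,
      n.choose ij.1 * ((-1) ^ ij.1 * (ascPochhammer R ij.1).eval (b - a)) *
        (ascPochhammer R ij.2).eval (b + ij.1) := by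
  have h := descPochhammer_eval_add n (Commute.all (a - b) (b + n - 1))
  rw [descPochhammer_eval_eq_ascPochhammer, show a - b + (b + n - 1) - n + 1 = a by ring] at h
  rw [h]
  refine sum_congr rfl fun ⟨i, j⟩ hij => ?_
  obtain rfl : i + j = n := HasAntidiagonal.mem_antidiagonal.mp hij
  have hneg : (-1) ^ i * (ascPochhammer R i).eval (b - a) = (descPochhammer R i).eval (a - b) := by
    rw [← neg_sub, ascPochhammer_eval_neg_eq_descPochhammer, ← mul_assoc, ← mul_pow]
    simp
  dsimp only
  rw [hneg, descPochhammer_eval_eq_ascPochhammer (r := b + ((i + j : ℕ) : R) - 1), mul_assoc]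
  congr 3
  push_cast
  ring

open Nat in
noncomputable def kummerTerm (a b z : ℝ) (n : ℕ) : ℝ :=
  (ascPochhammer ℝ n).eval a / (ascPochhammer ℝ n).eval b * z ^ n / n !

theorem kummerM_eq_tsum (a b z : ℝ) : kummerM a b z = ∑' n, kummerTerm a b z n := rfl

theorem kummerTerm_succ (a b z : ℝ) (n : ℕ) :
    kummerTerm a b z (n + 1) = kummerTerm a b z n * ((a + n) / (b + n) * (z * (1 / (n + 1)))) := by
  simp only [kummerTerm, ascPochhammer_succ_eval, pow_succ, Nat.factorial_succ, Nat.cast_mul,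
    Nat.cast_succ, div_eq_mul_inv, mul_inv]
  ring

theorem summable_norm_kummerTerm (a b z : ℝ) : Summable fun n => ‖kummerTerm a b z n‖ := by
  refine summable_norm_of_succ_eq_mul_of_tendsto_zero (kummerTerm_succ a b z) ?_
  have hab : Tendsto (fun n : ℕ => (a + n) / (b + n)) atTop (𝓝 1) := by
    simpa using tendsto_add_mul_div_add_mul_atTop_nhds a b 1 one_ne_zero
  simpa using hab.mul (tendsto_const_nhds.mul (tendsto_one_div_add_atTop_nhds_zero_nat (𝕜 := ℝ)))

theorem sum_antidiagonal_kummerTerm_mul_pow_div_factorial (a b z : ℝ) (n : ℕ)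
    (hb : (ascPochhammer ℝ n).eval b ≠ 0) :
    ∑ ij ∈ antidiagonal n, kummerTerm (b - a) b (-z) ij.1 * (z ^ ij.2 / ij.2.factorial) =
      kummerTerm a b z n := by
  rw [kummerTerm, ascPochhammer_eval_eq_sum_antidiagonal a b n, sum_div, sum_mul, sum_div]
  refine sum_congr rfl fun ⟨i, j⟩ hij => ?_
  obtain rfl : i + j = n := HasAntidiagonal.mem_antidiagonal.mp hij
  rw [ascPochhammer_eval_add_nat] at hb ⊢
  have hfac : ((i + j).factorial : ℝ) = (i + j).choose i * i.factorial * j.factorial := by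
    rw [Nat.choose_symm_add]
    exact_mod_cast (Nat.add_choose_mul_factorial_mul_factorial i j).symm
  have hchoose : ((i + j).choose i : ℝ) ≠ 0 := by
    exact_mod_cast (Nat.choose_pos (Nat.le_add_right i j)).ne'
  have hbi := left_ne_zero_of_mul hb
  have hbj := right_ne_zero_of_mul hb
  simp only [kummerTerm, hfac]
  rw [neg_pow z, pow_add]
  field_simp

theorem kummer_transformation (a b z : ℝ) (hb : ∀ k : ℕ, b ≠ -(k : ℝ)) :
    kummerM a b z = Real.exp z * kummerM (b - a) b (-z) := by
  have hb_ne : ∀ n, (ascPochhammer ℝ n).eval b ≠ 0 := fun n h => by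
    obtain ⟨k, -, hk⟩ := (ascPochhammer_eval_eq_zero_iff n b).mp h
    exact hb k (by rw [hk, neg_neg])
  have hexp : Summable fun n : ℕ => ‖z ^ n / n.factorial‖ := by
    simpa [abs_div] using Real.summable_pow_div_factorial |z|
  rw [kummerM_eq_tsum, kummerM_eq_tsum, mul_comm, Real.exp_eq_exp_ℝ, NormedSpace.exp_eq_tsum_div,
    tsum_mul_tsum_eq_tsum_sum_antidiagonal_of_summable_norm (summable_norm_kummerTerm _ _ _) hexp]
  exact tsum_congr fun n => (sum_antidiagonal_kummerTerm_mul_pow_div_factorial a b z n (hb_ne n)).symm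
end

section
/- Euler-type integral representation: for real a, b with a > 0 and b - a > 0, and any real z, M(a,b,z) = (Γ(b)/(Γ(a)Γ(b-a))) · ∫₀¹ e^{zt} t^{a-1} (1-t)^{b-a-1} dt. -/
open MeasureTheory Real Set

lemma poch_pos {x : ℝ} (hx : 0 < x) (n : ℕ) : 0 < (ascPochhammer ℝ n).eval x := by
  induction n with
  | zero => simp
  | succ n ih =>
    rw [ascPochhammer_succ_right]
    simp only [Polynomial.eval_mul, Polynomial.eval_add, Polynomial.eval_X,
      Polynomial.eval_natCast]
    exact mul_pos ih (by positivity)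

lemma gamma_add_nat {x : ℝ} (hx : 0 < x) (n : ℕ) :
    Real.Gamma (x + n) = Real.Gamma x * (ascPochhammer ℝ n).eval x := by
  induction n with
  | zero => simp
  | succ n ih =>
    have hxn : (0:ℝ) < x + n := by positivity
    have : x + (n + 1 : ℕ) = (x + n) + 1 := by push_cast; ring
    rw [this, Real.Gamma_add_one hxn.ne', ih, ascPochhammer_succ_right]
    simp only [Polynomial.eval_mul, Polynomial.eval_add, Polynomial.eval_X,
      Polynomial.eval_natCast]
    ring

lemma betaIntegrable {u v : ℝ} (hu : 0 < u) (hv : 0 < v) :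
    IntervalIntegrable (fun t : ℝ => t ^ (u - 1) * (1 - t) ^ (v - 1)) volume 0 1 := by
  have h := Complex.betaIntegral_convergent (u := (u : ℂ)) (v := (v : ℂ))
    (by simpa using hu) (by simpa using hv)
  rw [intervalIntegrable_iff_integrableOn_Ioc_of_le zero_le_one] at h ⊢
  refine (h.re).congr ?_
  filter_upwards [ae_restrict_mem measurableSet_Ioc] with t ht
  have h0 : (0:ℝ) ≤ t := ht.1.le
  have h1 : (0:ℝ) ≤ 1 - t := by linarith [ht.2]
  have e1 : (t : ℂ) ^ ((u : ℂ) - 1) = ((t ^ (u - 1) : ℝ) : ℂ) := by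
    rw [Complex.ofReal_cpow h0]; push_cast; ring_nf
  have e2 : (1 - (t : ℂ)) ^ ((v : ℂ) - 1) = (((1 - t) ^ (v - 1) : ℝ) : ℂ) := by
    rw [show (1 - (t:ℂ)) = (((1 - t : ℝ)) : ℂ) by push_cast; ring,
      Complex.ofReal_cpow h1]
    push_cast; ring_nf
  simp [e1, e2, ← Complex.ofReal_mul]

lemma betaIntegral_eq {u v : ℝ} (hu : 0 < u) (hv : 0 < v) :
    ∫ t in (0:ℝ)..1, t ^ (u - 1) * (1 - t) ^ (v - 1) =
      Real.Gamma u * Real.Gamma v / Real.Gamma (u + v) := by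
  have hB : Complex.betaIntegral u v =
      ((∫ t in (0:ℝ)..1, t ^ (u - 1) * (1 - t) ^ (v - 1) : ℝ) : ℂ) := by
    rw [Complex.betaIntegral, ← intervalIntegral.integral_ofReal]
    refine intervalIntegral.integral_congr fun t ht => ?_
    rw [uIcc_of_le zero_le_one] at ht
    have h0 : (0:ℝ) ≤ t := ht.1
    have h1 : (0:ℝ) ≤ 1 - t := by linarith [ht.2]
    have e1 : (t : ℂ) ^ ((u : ℂ) - 1) = ((t ^ (u - 1) : ℝ) : ℂ) := by
      rw [Complex.ofReal_cpow h0]; push_cast; ring_nf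
    have e2 : (1 - (t : ℂ)) ^ ((v : ℂ) - 1) = (((1 - t) ^ (v - 1) : ℝ) : ℂ) := by
      rw [show (1 - (t:ℂ)) = (((1 - t : ℝ)) : ℂ) by push_cast; ring,
        Complex.ofReal_cpow h1]
      push_cast; ring_nf
    simp [e1, e2, ← Complex.ofReal_mul]
  have hG := Complex.Gamma_mul_Gamma_eq_betaIntegral (s := (u:ℂ)) (t := (v:ℂ))
    (by simpa using hu) (by simpa using hv)
  rw [hB] at hG
  have huv : Real.Gamma (u + v) ≠ 0 := (Real.Gamma_pos_of_pos (by linarith)).ne'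
  have : ((Real.Gamma u * Real.Gamma v : ℝ) : ℂ) =
      ((Real.Gamma (u + v) * ∫ t in (0:ℝ)..1, t ^ (u - 1) * (1 - t) ^ (v - 1) : ℝ) : ℂ) := by
    push_cast
    rw [← Complex.Gamma_ofReal, ← Complex.Gamma_ofReal, ← Complex.Gamma_ofReal] at *
    push_cast at hG ⊢
    exact hG
  have := Complex.ofReal_injective this
  field_simp
  linarith [this]

theorem kummerM_integral_repr (a b z : ℝ) (ha : 0 < a) (hba : 0 < b - a) :
    kummerM a b z =
      (Real.Gamma b / (Real.Gamma a * Real.Gamma (b - a))) *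
        ∫ t in (0:ℝ)..1, Real.exp (z * t) * t ^ (a - 1) * (1 - t) ^ (b - a - 1) := by
  have hb : 0 < b := by linarith
  set C := Real.Gamma b / (Real.Gamma a * Real.Gamma (b - a)) with hC
  set f : ℕ → ℝ → ℝ :=
    fun n t => (z ^ n / n.factorial) * (t ^ (a + n - 1) * (1 - t) ^ (b - a - 1)) with hf
  -- integrability of each term
  have hfi : ∀ n : ℕ, Integrable (f n) (volume.restrict (Ioc (0:ℝ) 1)) := by
    intro n
    have h := betaIntegrable (u := a + n) (by positivity) hba
    rw [intervalIntegrable_iff_integrableOn_Ioc_of_le zero_le_one] at h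
    exact h.const_mul _
  -- integrability of the dominating function
  have hgi : Integrable (fun t : ℝ => t ^ (a - 1) * (1 - t) ^ (b - a - 1))
      (volume.restrict (Ioc (0:ℝ) 1)) := by
    have h := betaIntegrable ha hba
    rwa [intervalIntegrable_iff_integrableOn_Ioc_of_le zero_le_one] at h
  set B : ℝ := ∫ t in Ioc (0:ℝ) 1, t ^ (a - 1) * (1 - t) ^ (b - a - 1) with hB
  -- bound on norm integrals
  have hbound : ∀ n : ℕ, (∫ t in Ioc (0:ℝ) 1, ‖f n t‖) ≤ |z| ^ n / n.factorial * B := by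
    intro n
    rw [hB, ← integral_const_mul]
    refine setIntegral_mono_on (hfi n).norm (hgi.const_mul _) measurableSet_Ioc ?_
    intro t ht
    have ht0 : (0:ℝ) < t := ht.1
    have ht1 : (0:ℝ) ≤ 1 - t := by linarith [ht.2]
    have hgt : (0:ℝ) ≤ (1 - t) ^ (b - a - 1) := Real.rpow_nonneg ht1 _
    have h1 : t ^ (a + n - 1) ≤ t ^ (a - 1) :=
      Real.rpow_le_rpow_of_exponent_ge ht0 ht.2 (by linarith [Nat.cast_nonneg (α := ℝ) n])
    have : ‖f n t‖ = |z| ^ n / n.factorial * (t ^ (a + n - 1) * (1 - t) ^ (b - a - 1)) := by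
      rw [hf]
      rw [norm_mul, norm_mul, Real.norm_of_nonneg (Real.rpow_nonneg ht0.le _),
        Real.norm_of_nonneg hgt]
      simp [abs_div, abs_pow]
    rw [this]
    have hc : (0:ℝ) ≤ |z| ^ n / n.factorial := by positivity
    calc |z| ^ n / n.factorial * (t ^ (a + n - 1) * (1 - t) ^ (b - a - 1))
        ≤ |z| ^ n / n.factorial * (t ^ (a - 1) * (1 - t) ^ (b - a - 1)) := by
          apply mul_le_mul_of_nonneg_left (mul_le_mul_of_nonneg_right h1 hgt) hc
      _ = _ := by ring
  -- summability of norm integrals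
  have hsum : Summable fun n : ℕ => ∫ t in Ioc (0:ℝ) 1, ‖f n t‖ := by
    refine Summable.of_nonneg_of_le (fun n => integral_nonneg fun t => norm_nonneg _)
      hbound ?_
    exact (Real.summable_pow_div_factorial |z|).mul_right B
  -- swap sum and integral
  have hswap := integral_tsum_of_summable_integral_norm hfi hsum
  -- pointwise sum
  have hpt : ∀ t ∈ Ioc (0:ℝ) 1,
      (∑' n : ℕ, f n t) = Real.exp (z * t) * t ^ (a - 1) * (1 - t) ^ (b - a - 1) := by
    intro t ht
    have ht0 : (0:ℝ) < t := ht.1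
    have hfe : ∀ n : ℕ, f n t =
        ((z * t) ^ n / n.factorial) * (t ^ (a - 1) * (1 - t) ^ (b - a - 1)) := by
      intro n
      simp only [hf]
      have : t ^ (a + n - 1) = t ^ (n:ℕ) * t ^ (a - 1) := by
        rw [← Real.rpow_natCast t n, ← Real.rpow_add ht0]
        ring_nf
      rw [this, mul_pow]
      ring
    rw [tsum_congr hfe, tsum_mul_right]
    have : Real.exp (z * t) = ∑' n : ℕ, (z * t) ^ n / n.factorial := by
      rw [Real.exp_eq_exp_ℝ, NormedSpace.exp_eq_tsum_div]
    rw [← this]; ring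
  -- value of each term integral
  have hval : ∀ n : ℕ, (∫ t in Ioc (0:ℝ) 1, f n t) =
      z ^ n / n.factorial *
        (Real.Gamma (a + n) * Real.Gamma (b - a) / Real.Gamma (b + n)) := by
    intro n
    simp only [hf]
    rw [integral_const_mul]
    congr 1
    rw [← intervalIntegral.integral_of_le zero_le_one]
    have := betaIntegral_eq (u := a + n) (v := b - a) (by positivity) hba
    rw [show a + (n:ℝ) + (b - a) = b + n by ring] at this
    exact this
  -- termwise identity
  have hterm : ∀ n : ℕ,
      ((ascPochhammer ℝ n).eval a / (ascPochhammer ℝ n).eval b) * z ^ n / n.factorial =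
        C * ∫ t in Ioc (0:ℝ) 1, f n t := by
    intro n
    rw [hval n, gamma_add_nat ha n, gamma_add_nat hb n, hC]
    have h1 := (Real.Gamma_pos_of_pos ha).ne'
    have h2 := (Real.Gamma_pos_of_pos hb).ne'
    have h3 := (Real.Gamma_pos_of_pos hba).ne'
    have h4 := (poch_pos hb n).ne'
    have h5 : (n.factorial : ℝ) ≠ 0 := by positivity
    field_simp
  calc kummerM a b z = ∑' n : ℕ, C * ∫ t in Ioc (0:ℝ) 1, f n t := tsum_congr hterm
    _ = C * ∑' n : ℕ, ∫ t in Ioc (0:ℝ) 1, f n t := tsum_mul_left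
    _ = C * ∫ t in Ioc (0:ℝ) 1, ∑' n : ℕ, f n t := by rw [hswap]
    _ = C * ∫ t in Ioc (0:ℝ) 1,
          Real.exp (z * t) * t ^ (a - 1) * (1 - t) ^ (b - a - 1) := by
        rw [setIntegral_congr_fun measurableSet_Ioc hpt]
    _ = _ := by rw [intervalIntegral.integral_of_le zero_le_one]
end
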